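/- Let γ' ∈ (0,1), H(1 − √γ') ≥ 1, 0 < Γ ≤ 1, let τ ≥ 0 and t₀ ≥ max(2H, 1) with t₀ a real and τ an integer, set α_l = H/(l + t₀), and define β̃_{h,t} = α_h ∏_{l=h+1}^{t}(1 − α_l) (empty product equal to 1). Then for every integer t ≥ τ: ∑_{h=τ}^{t} β̃_{h,t} · (h + t₀)^{−Γ} ≤ 1/(√γ' · (t + 1 + t₀)^Γ). -/

import Mathlib

/-!
With `Sₜ = ∑_{h=τ}^{t} β̃_{h,t} (h + t₀)^{-Γ}`, the weights satisfy the recursion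
`S_{t+1} = (1 - α_{t+1}) Sₜ + α_{t+1} (t + 1 + t₀)^{-Γ}`, so it suffices that the bound
`bₜ = 1 / (√γ' (t + 1 + t₀)^Γ)` is a supersolution of this recursion. Writing `x = t + 1 + t₀`,
this reduces to `1 - H(1 - √γ')/x ≤ 1 - 1/x ≤ x/(x + 1) ≤ (x/(x + 1))^Γ`.
-/

open Finset

section RecursionWeight

variable {R : Type*} [CommRing R]

def recursionWeight (α : ℕ → R) (h t : ℕ) : R :=
  α h * ∏ l ∈ Icc (h + 1) t, (1 - α l)

theorem recursionWeight_self (α : ℕ → R) (t : ℕ) : recursionWeight α t t = α t := by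
  rw [recursionWeight, Icc_eq_empty (by omega), prod_empty, mul_one]

theorem recursionWeight_succ (α : ℕ → R) {h t : ℕ} (hht : h ≤ t) :
    recursionWeight α h (t + 1) = (1 - α (t + 1)) * recursionWeight α h t := by
  rw [recursionWeight, recursionWeight, prod_Icc_succ_top (by omega)]
  ring

theorem sum_recursionWeight_mul_succ (α f : ℕ → R) {τ t : ℕ} (hτ : τ ≤ t + 1) :
    ∑ h ∈ Icc τ (t + 1), recursionWeight α h (t + 1) * f h =
      (1 - α (t + 1)) * ∑ h ∈ Icc τ t, recursionWeight α h t * f h + α (t + 1) * f (t + 1) := by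
  rw [sum_Icc_succ_top hτ, recursionWeight_self, mul_sum]
  congr 1
  refine sum_congr rfl fun h hh => ?_
  rw [recursionWeight_succ α (mem_Icc.mp hh).2, mul_assoc]

theorem sum_recursionWeight_mul_le [PartialOrder R] [IsOrderedRing R] {α f b : ℕ → R} {τ : ℕ}
    (hα : ∀ l, α l ≤ 1) (hbase : α τ * f τ ≤ b τ)
    (hstep : ∀ t, τ ≤ t → (1 - α (t + 1)) * b t + α (t + 1) * f (t + 1) ≤ b (t + 1)) :
    ∀ t, τ ≤ t → ∑ h ∈ Icc τ t, recursionWeight α h t * f h ≤ b t := by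
  intro t ht
  induction t, ht using Nat.le_induction with
  | base => simpa [recursionWeight_self] using hbase
  | succ t ht ih =>
    rw [sum_recursionWeight_mul_succ α f (by omega)]
    have hα' : 0 ≤ 1 - α (t + 1) := sub_nonneg.mpr (hα _)
    exact (add_le_add_left (mul_le_mul_of_nonneg_left ih hα') _).trans (hstep t ht)

end RecursionWeight

theorem one_sub_inv_le_rpow_div_add_one {x Γ : ℝ} (hx : 0 < x) (hΓ : Γ ≤ 1) :
    1 - 1 / x ≤ (x / (x + 1)) ^ Γ :=
  calc 1 - 1 / x ≤ x / (x + 1) := by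
        rw [one_sub_div hx.ne', div_le_div_iff₀ hx (by linarith)]
        nlinarith
    _ ≤ (x / (x + 1)) ^ Γ :=
        Real.self_le_rpow_of_le_one (by positivity) (div_le_one_of_le₀ (by linarith) (by linarith)) hΓ

theorem rpow_bound_step {s H Γ x : ℝ} (hs : 0 < s) (hH : 1 ≤ H * (1 - s)) (hΓ : Γ ≤ 1)
    (hx : 0 < x) :
    (1 - H / x) * (1 / (s * x ^ Γ)) + H / x * x ^ (-Γ) ≤ 1 / (s * (x + 1) ^ Γ) := by
  have hxΓ : 0 < x ^ Γ := Real.rpow_pos_of_pos hx Γ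
  have hx1Γ : 0 < (x + 1) ^ Γ := Real.rpow_pos_of_pos (by linarith) Γ
  have hcontract : 1 - H * (1 - s) / x ≤ (x / (x + 1)) ^ Γ :=
    (sub_le_sub_left (div_le_div_of_nonneg_right hH hx.le) 1).trans
      (one_sub_inv_le_rpow_div_add_one hx hΓ)
  calc (1 - H / x) * (1 / (s * x ^ Γ)) + H / x * x ^ (-Γ)
      = (1 - H * (1 - s) / x) / (s * x ^ Γ) := by
        rw [Real.rpow_neg hx.le]
        field_simp
        ring
    _ ≤ (x / (x + 1)) ^ Γ / (s * x ^ Γ) := by gcongr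
    _ = 1 / (s * (x + 1) ^ Γ) := by
        rw [Real.div_rpow hx.le (by linarith)]
        field_simp

/-- Lemma 3: bound on weighted sums of inverse powers with the recursion weights
`β̃_{h,t} = α_h ∏_{l=h+1}^{t} (1 - α_l)` induced by step sizes `α_l = H / (l + t₀)`.
Here `^` is the real power `Real.rpow`. -/
theorem stmt_8 (γ' H Γ t₀ : ℝ) (τ : ℕ)
    (hγ' : γ' ∈ Set.Ioo (0 : ℝ) 1)
    (hH : 1 ≤ H * (1 - Real.sqrt γ'))
    (hΓ : Γ ∈ Set.Ioc (0 : ℝ) 1)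
    (ht₀ : max (2 * H) 1 ≤ t₀) :
    ∀ t : ℕ, τ ≤ t →
      ∑ h ∈ Finset.Icc τ t,
          ((H / ((h : ℝ) + t₀)) * ∏ l ∈ Finset.Icc (h + 1) t, (1 - H / ((l : ℝ) + t₀)))
            * ((h : ℝ) + t₀) ^ (-Γ) ≤
        1 / (Real.sqrt γ' * ((t : ℝ) + 1 + t₀) ^ Γ) := by
  have hs : 0 < √γ' := Real.sqrt_pos.mpr hγ'.1
  have hH_le : H ≤ t₀ := by rcases max_cases (2 * H) 1 with ⟨h, _⟩ | ⟨h, _⟩ <;> linarith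
  have hpos : ∀ n : ℕ, 0 < (n : ℝ) + t₀ := fun n => by
    linarith [le_of_max_le_right ht₀, n.cast_nonneg (α := ℝ)]
  have hbound : ∀ n : ℕ, H / ((n : ℝ) + t₀) ≤ 1 := fun n =>
    (div_le_one (hpos n)).mpr (by linarith [n.cast_nonneg (α := ℝ)])
  refine sum_recursionWeight_mul_le (α := fun l => H / ((l : ℝ) + t₀))
    (f := fun h => ((h : ℝ) + t₀) ^ (-Γ)) (b := fun t => 1 / (√γ' * ((t : ℝ) + 1 + t₀) ^ Γ))
    hbound ?_ fun t _ => ?_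
  · have hfirst : 0 ≤ (1 - H / ((τ : ℝ) + t₀)) * (1 / (√γ' * ((τ : ℝ) + t₀) ^ Γ)) :=
      mul_nonneg (sub_nonneg.mpr (hbound τ)) (by have := hpos τ; positivity)
    have := rpow_bound_step hs hH hΓ.2 (hpos τ)
    simp only [add_right_comm _ (1 : ℝ)] at this ⊢
    linarith
  · simpa only [Nat.cast_add_one, add_right_comm _ (1 : ℝ)] using
      rpow_bound_step hs hH hΓ.2 (hpos (t + 1))
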